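/- arXiv:2310.00425 — 2 statements merged into one kernel-verified Lean document; each statement's English description precedes it below -/
import Mathlib

section
/- For k ≥ 1, the bilinear operator T_k(f,g)(x) = sup_{t>0} ∫_{2^{-k-1}}^{2^{-k}} |f(x-ty)| |g(x-t√(1-y²))| dy on ℝ satisfies the pointwise bound T_k(f,g)(x) ≲ 2^{k/3} M_3 f(x) · M_{3/2} g(x) for a.e. x, where M_r h = (M(|h|^r))^{1/r} and M is the Hardy–Littlewood maximal operator. -/
open MeasureTheory Set
open scoped ENNReal

noncomputable section

/-- `Mr r h` : the `r`-th Hardy–Littlewood maximal function `(M(|h|^r))^{1/r}` on `ℝ`,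
defined via centered intervals. -/
def Mr (r : ℝ) (h : ℝ → ℝ) (x : ℝ) : ℝ≥0∞ :=
  (⨆ (t : ℝ) (_ : 0 < t), ENNReal.ofReal (1 / (2 * t)) *
    ∫⁻ y in Set.Ioo (x - t) (x + t), ENNReal.ofReal (|h y| ^ r)) ^ (1 / r)

/-- The dyadic piece `T_k` of the one-dimensional bilinear spherical maximal function. -/
def Tk (k : ℕ) (f g : ℝ → ℝ) (x : ℝ) : ℝ≥0∞ :=
  ⨆ (t : ℝ) (_ : 0 < t),
    ∫⁻ y in Set.Ioc ((2 : ℝ) ^ (-(k : ℝ) - 1)) ((2 : ℝ) ^ (-(k : ℝ))),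
      ENNReal.ofReal |f (x - t * y)| * ENNReal.ofReal |g (x - t * Real.sqrt (1 - y ^ 2))|

/-! For fixed `t`, Hölder's inequality in `y ∈ (2^{-k-1}, 2^{-k}]` with exponents `3` and `3/2`
splits the integral into a factor in `f` and a factor in `g`. In each factor substitute
`v = x - t y`, resp. `v = x - t √(1 - y²)`. Both maps are injective; the first has Jacobian `t`
and lands within `2t 2^{-k}` of `x`, the second has Jacobian at least `t y ≥ t 2^{-k-1}` and lands
within `2t` of `x`. So the factors are `≲ (2^{-k} M₃f(x)³)^{1/3}` and
`≲ (2^{k} M_{3/2}g(x)^{3/2})^{2/3}`, whose product is `2^{k/3} M₃f(x) M_{3/2}g(x)`. -/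

open Real

theorem lintegral_Ioo_le_mul_Mr_rpow {r : ℝ} (hr : r ≠ 0) (h : ℝ → ℝ) (x : ℝ) {ρ : ℝ}
    (hρ : 0 < ρ) :
    ∫⁻ v in Ioo (x - ρ) (x + ρ), ENNReal.ofReal (|h v| ^ r) ≤
      ENNReal.ofReal (2 * ρ) * Mr r h x ^ r := by
  have hMr : Mr r h x ^ r = ⨆ (t : ℝ) (_ : 0 < t), ENNReal.ofReal (1 / (2 * t)) *
      ∫⁻ y in Ioo (x - t) (x + t), ENNReal.ofReal (|h y| ^ r) := by
    rw [Mr, ← ENNReal.rpow_mul, one_div_mul_cancel hr, ENNReal.rpow_one]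
  calc ∫⁻ v in Ioo (x - ρ) (x + ρ), ENNReal.ofReal (|h v| ^ r)
      = ENNReal.ofReal (2 * ρ) * (ENNReal.ofReal (1 / (2 * ρ)) *
          ∫⁻ v in Ioo (x - ρ) (x + ρ), ENNReal.ofReal (|h v| ^ r)) := by
        rw [← mul_assoc, ← ENNReal.ofReal_mul (by positivity), mul_one_div_cancel (by positivity),
          ENNReal.ofReal_one, one_mul]
    _ ≤ ENNReal.ofReal (2 * ρ) * Mr r h x ^ r := by
        rw [hMr]
        gcongr
        exact le_iSup₂_of_le ρ hρ le_rfl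

theorem lintegral_comp_le_mul_Mr_rpow {r : ℝ} (hr : r ≠ 0) (h : ℝ → ℝ) {x ρ c : ℝ}
    (hρ : 0 < ρ) (hc : 0 < c) {s : Set ℝ} (hs : MeasurableSet s) {φ φ' : ℝ → ℝ}
    (hφ : ∀ y ∈ s, HasDerivWithinAt φ (φ' y) s y) (hinj : InjOn φ s)
    (hφ' : ∀ y ∈ s, c ≤ |φ' y|) (hmaps : MapsTo φ s (Ioo (x - ρ) (x + ρ))) :
    ∫⁻ y in s, ENNReal.ofReal (|h (φ y)| ^ r) ≤ ENNReal.ofReal (2 * ρ / c) * Mr r h x ^ r := by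
  rw [ENNReal.ofReal_div_of_pos hc, ← ENNReal.mul_div_right_comm,
    ENNReal.le_div_iff_mul_le (.inl (ENNReal.ofReal_pos.2 hc).ne') (.inl ENNReal.ofReal_ne_top),
    mul_comm, ← lintegral_const_mul' _ _ ENNReal.ofReal_ne_top]
  calc ∫⁻ y in s, ENNReal.ofReal c * ENNReal.ofReal (|h (φ y)| ^ r)
      ≤ ∫⁻ y in s, ENNReal.ofReal |φ' y| * ENNReal.ofReal (|h (φ y)| ^ r) :=
        setLIntegral_mono' hs fun y hy => by gcongr; exact hφ' y hy
    _ = ∫⁻ v in φ '' s, ENNReal.ofReal (|h v| ^ r) :=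
        (lintegral_image_eq_lintegral_abs_deriv_mul hs hφ hinj
          fun v => ENNReal.ofReal (|h v| ^ r)).symm
    _ ≤ ∫⁻ v in Ioo (x - ρ) (x + ρ), ENNReal.ofReal (|h v| ^ r) :=
        lintegral_mono_set hmaps.image_subset
    _ ≤ ENNReal.ofReal (2 * ρ) * Mr r h x ^ r := lintegral_Ioo_le_mul_Mr_rpow hr h x hρ

theorem lintegral_Ioc_comp_sub_mul_le {r : ℝ} (hr : r ≠ 0) (f : ℝ → ℝ) (x : ℝ) {t a b : ℝ}
    (ht : 0 < t) (ha : 0 ≤ a) (hb : 0 < b) :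
    ∫⁻ y in Ioc a b, ENNReal.ofReal (|f (x - t * y)| ^ r) ≤
      ENNReal.ofReal (4 * b) * Mr r f x ^ r := by
  have hderiv : ∀ y ∈ Ioc a b, HasDerivWithinAt (fun y => x - t * y) (-t) (Ioc a b) y :=
    fun y _ => by simpa using ((hasDerivAt_id y).const_mul t).const_sub x |>.hasDerivWithinAt
  have hinj : InjOn (fun y => x - t * y) (Ioc a b) := fun y₁ _ y₂ _ he =>
    mul_left_cancel₀ ht.ne' (by linarith [show x - t * y₁ = x - t * y₂ from he])
  have hmaps : MapsTo (fun y => x - t * y) (Ioc a b) (Ioo (x - 2 * t * b) (x + 2 * t * b)) :=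
    fun y ⟨hay, hyb⟩ => ⟨by nlinarith, by nlinarith⟩
  convert lintegral_comp_le_mul_Mr_rpow hr f (by positivity) ht measurableSet_Ioc hderiv hinj
    (fun _ _ => (abs_neg t).symm ▸ (abs_of_pos ht).ge) hmaps using 3
  field_simp
  ring

theorem lintegral_Ioc_comp_sub_mul_sqrt_le {r : ℝ} (hr : r ≠ 0) (g : ℝ → ℝ) (x : ℝ)
    {t a b : ℝ} (ht : 0 < t) (ha : 0 < a) (hb : b < 1) :
    ∫⁻ y in Ioc a b, ENNReal.ofReal (|g (x - t * √(1 - y ^ 2))| ^ r) ≤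
      ENNReal.ofReal (4 / a) * Mr r g x ^ r := by
  have hsqrt_pos : ∀ y ∈ Ioc a b, 0 < √(1 - y ^ 2) := fun y ⟨hay, hyb⟩ =>
    sqrt_pos.2 (by nlinarith)
  have hsqrt_le_one : ∀ y, √(1 - y ^ 2) ≤ 1 := fun y =>
    sqrt_le_one.2 (by nlinarith [sq_nonneg y])
  have hderiv : ∀ y ∈ Ioc a b, HasDerivWithinAt (fun y => x - t * √(1 - y ^ 2))
      (t * y / √(1 - y ^ 2)) (Ioc a b) y := by
    intro y hy
    have hsq : HasDerivAt (fun y : ℝ => 1 - y ^ 2) (-(2 * y)) y := by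
      simpa using (hasDerivAt_pow 2 y).const_sub 1
    have hsqrt := (hasDerivAt_sqrt (sqrt_pos.1 (hsqrt_pos y hy)).ne').comp y hsq
    refine ((hsqrt.const_mul t).const_sub x |>.congr_deriv ?_).hasDerivWithinAt
    field_simp [(hsqrt_pos y hy).ne']
  have hinj : InjOn (fun y => x - t * √(1 - y ^ 2)) (Ioc a b) := by
    intro y₁ ⟨hay₁, hy₁b⟩ y₂ ⟨hay₂, hy₂b⟩ he
    have hsqrt : √(1 - y₁ ^ 2) = √(1 - y₂ ^ 2) := by
      simp only at he
      exact mul_left_cancel₀ ht.ne' (by linarith)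
    rw [sqrt_inj (by nlinarith) (by nlinarith)] at hsqrt
    exact (sq_eq_sq₀ (by linarith) (by linarith)).1 (by linarith)
  have hderiv_ge : ∀ y ∈ Ioc a b, t * a ≤ |t * y / √(1 - y ^ 2)| := by
    intro y hy
    have hs := hsqrt_pos y hy
    rw [abs_of_nonneg (div_nonneg (by nlinarith [hy.1]) hs.le), le_div_iff₀ hs]
    nlinarith [mul_le_mul_of_nonneg_left (hsqrt_le_one y) (by positivity : 0 ≤ t * a),
      mul_le_mul_of_nonneg_left hy.1.le ht.le]
  have hmaps : MapsTo (fun y => x - t * √(1 - y ^ 2)) (Ioc a b) (Ioo (x - 2 * t) (x + 2 * t)) :=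
    fun y hy => ⟨by nlinarith [hsqrt_le_one y], by nlinarith [hsqrt_pos y hy]⟩
  convert lintegral_comp_le_mul_Mr_rpow hr g (by positivity) (by positivity) measurableSet_Ioc
    hderiv hinj hderiv_ge hmaps using 3
  field_simp
  ring

theorem lintegral_Ioc_mul_le_Mr_mul_Mr {f g : ℝ → ℝ} (hf : Measurable f) (hg : Measurable g)
    (x : ℝ) {t a b : ℝ} (ht : 0 < t) (ha : 0 < a) (hab : a ≤ b) (hb : b < 1) :
    ∫⁻ y in Ioc a b, ENNReal.ofReal |f (x - t * y)| * ENNReal.ofReal |g (x - t * √(1 - y ^ 2))| ≤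
      ENNReal.ofReal ((4 * b) ^ (1 / 3 : ℝ) * (4 / a) ^ (2 / 3 : ℝ)) *
        (Mr 3 f x * Mr (3 / 2) g x) := by
  have hF : AEMeasurable (fun y => ENNReal.ofReal |f (x - t * y)|)
      (volume.restrict (Ioc a b)) := by
    fun_prop
  have hG : AEMeasurable (fun y => ENNReal.ofReal |g (x - t * √(1 - y ^ 2))|)
      (volume.restrict (Ioc a b)) := by
    fun_prop
  have hb0 : 0 < b := ha.trans_le hab
  have hpow (r u : ℝ) (hr : 0 ≤ r) : ENNReal.ofReal |u| ^ r = ENNReal.ofReal (|u| ^ r) :=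
    ENNReal.ofReal_rpow_of_nonneg (abs_nonneg u) hr
  calc _ ≤ (∫⁻ y in Ioc a b, ENNReal.ofReal |f (x - t * y)| ^ (3 : ℝ)) ^ (1 / 3 : ℝ) *
        (∫⁻ y in Ioc a b, ENNReal.ofReal |g (x - t * √(1 - y ^ 2))| ^ (3 / 2 : ℝ)) ^
          (1 / (3 / 2) : ℝ) :=
        ENNReal.lintegral_mul_le_Lp_mul_Lq _ ⟨by norm_num, by norm_num, by norm_num⟩ hF hG
    _ ≤ (ENNReal.ofReal (4 * b) * Mr 3 f x ^ (3 : ℝ)) ^ (1 / 3 : ℝ) *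
        (ENNReal.ofReal (4 / a) * Mr (3 / 2) g x ^ (3 / 2 : ℝ)) ^ (1 / (3 / 2) : ℝ) := by
        simp only [hpow _ _ (by norm_num : (0 : ℝ) ≤ 3), hpow _ _ (by norm_num : (0 : ℝ) ≤ 3 / 2)]
        gcongr
        · exact lintegral_Ioc_comp_sub_mul_le (by norm_num) f x ht ha.le hb0
        · exact lintegral_Ioc_comp_sub_mul_sqrt_le (by norm_num) g x ht ha hb
    _ = ENNReal.ofReal ((4 * b) ^ (1 / 3 : ℝ) * (4 / a) ^ (2 / 3 : ℝ)) *
        (Mr 3 f x * Mr (3 / 2) g x) := by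
        rw [show (1 / (3 / 2) : ℝ) = 2 / 3 by norm_num,
          ENNReal.mul_rpow_of_nonneg _ _ (by norm_num : (0 : ℝ) ≤ 1 / 3),
          ENNReal.mul_rpow_of_nonneg _ _ (by norm_num : (0 : ℝ) ≤ 2 / 3),
          ← ENNReal.rpow_mul, ← ENNReal.rpow_mul,
          ENNReal.ofReal_rpow_of_nonneg (by positivity) (by norm_num : (0 : ℝ) ≤ 1 / 3),
          ENNReal.ofReal_rpow_of_nonneg (by positivity) (by norm_num : (0 : ℝ) ≤ 2 / 3),
          ENNReal.ofReal_mul (by positivity)]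
        norm_num
        ring

theorem dyadic_holder_constant_le (k : ℕ) :
    (4 * (2 : ℝ) ^ (-(k : ℝ))) ^ (1 / 3 : ℝ) * (4 / (2 : ℝ) ^ (-(k : ℝ) - 1)) ^ (2 / 3 : ℝ) ≤
      8 * 2 ^ ((k : ℝ) / 3) := by
  have h4 : (4 : ℝ) = 2 ^ (2 : ℝ) := by norm_num
  have h8 : (8 : ℝ) = 2 ^ (3 : ℝ) := by norm_num
  rw [h4, h8, ← rpow_add two_pos, ← rpow_sub two_pos, ← rpow_mul zero_le_two,
    ← rpow_mul zero_le_two, ← rpow_add two_pos, ← rpow_add two_pos]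
  exact rpow_le_rpow_of_exponent_le one_le_two (by linarith)

/-- `T_k(f,g)(x) ≲ 2^{k/3} M₃f(x) · M_{3/2}g(x)` with an absolute constant. -/
theorem stmt0 : ∃ C : ℝ, 0 < C ∧ ∀ (k : ℕ), 1 ≤ k → ∀ (f g : ℝ → ℝ),
    Measurable f → Measurable g →
    ∀ᵐ x : ℝ, Tk k f g x ≤
      ENNReal.ofReal (C * 2 ^ ((k : ℝ) / 3)) * (Mr 3 f x * Mr (3 / 2) g x) := by
  refine ⟨8, by norm_num, fun k hk f g hf hg =>
    Filter.Eventually.of_forall fun x => iSup₂_le fun t ht => ?_⟩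
  have hk' : (1 : ℝ) ≤ k := by exact_mod_cast hk
  have ha : 0 < (2 : ℝ) ^ (-(k : ℝ) - 1) := by positivity
  have hab : (2 : ℝ) ^ (-(k : ℝ) - 1) ≤ 2 ^ (-(k : ℝ)) :=
    rpow_le_rpow_of_exponent_le one_le_two (by linarith)
  have hb : (2 : ℝ) ^ (-(k : ℝ)) < 1 := rpow_lt_one_of_one_lt_of_neg one_lt_two (by linarith)
  refine (lintegral_Ioc_mul_le_Mr_mul_Mr hf hg x ht ha hab hb).trans ?_
  gcongr ?_ * _
  exact ENNReal.ofReal_le_ofReal (dyadic_holder_constant_le k)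
end
end

section
/- Lorentz norm of a lacunary sum of indicator bumps: let p₀ ∈ [1,∞), a > 0 small, N ∈ ℕ, and f(x) = Σ_{i=1}^N 4^{(d/p₀) i} χ_{B(0, a 4^{-i})}(x) on ℝ^d. Then for every s ∈ (1, ∞), ‖f‖_{L^{p₀,s}(ℝ^d)} ≲ N^{1/s}, with implied constant independent of N. -/
/-! The heights `ρ^{ci}` grow geometrically while the radii `aρ^{-i}` shrink, so at `x ≠ 0` the
sum is dominated by a multiple of its last nonzero term: `f x ≤ C₀ (a/‖x‖)^c` with
`C₀ = ρ^c/(ρ^c - 1)`. For `c = d/p` this majorant is in weak `L^p`, so `t · d_f(t)^{1/p}` is bounded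
uniformly in `t`. As moreover `d_f ≤ |B(0, a/ρ)|` and `f ≤ C₀ ρ^{cN}`, the integrand
`(t d_f(t)^{1/p})^s / t` is bounded on `(0, 1]`, is `≲ 1/t` on `(1, C₀ ρ^{cN}]` and vanishes beyond,
so the Lorentz integral is `≲ 1 + log (C₀ ρ^{cN}) ≲ N`. -/

open MeasureTheory Set
open scoped ENNReal

noncomputable section

/-- The Lorentz `L^{p,s}` (quasi-)norm on `ℝ^d`,
`‖f‖_{L^{p,s}} = p^{1/s} (∫_0^∞ (t d_f(t)^{1/p})^s dt/t)^{1/s}` where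
`d_f(t) = |{|f| > t}|`. -/
def lorentzNorm (d : ℕ) (p s : ℝ) (f : EuclideanSpace ℝ (Fin d) → ℝ) : ℝ≥0∞ :=
  ENNReal.ofReal (p ^ (1 / s)) *
    (∫⁻ t in Set.Ioi (0 : ℝ),
      (ENNReal.ofReal t * (volume {x | t < |f x|}) ^ (1 / p)) ^ s *
        ENNReal.ofReal (1 / t)) ^ (1 / s)

theorem sum_pow_le_of_forall_pow_le {b B : ℝ} (hb : 1 < b) (hB : 0 ≤ B) {S : Finset ℕ}
    (h : ∀ i ∈ S, b ^ i ≤ B) : ∑ i ∈ S, b ^ i ≤ b / (b - 1) * B := by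
  rcases S.eq_empty_or_nonempty with rfl | hS
  · simpa using mul_nonneg (div_nonneg (by linarith) (by linarith)) hB
  have hb1 : 0 < b - 1 := by linarith
  set m := S.max' hS
  calc ∑ i ∈ S, b ^ i ≤ ∑ i ∈ Finset.range (m + 1), b ^ i :=
        Finset.sum_le_sum_of_subset_of_nonneg
          (fun i hi => Finset.mem_range_succ_iff.mpr (S.le_max' i hi))
          (fun i _ _ => by positivity)
    _ = (b ^ (m + 1) - 1) / (b - 1) := geom_sum_eq hb.ne' _
    _ ≤ b / (b - 1) * b ^ m := by
        rw [div_mul_eq_mul_div, pow_succ', div_le_div_iff_of_pos_right hb1]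
        linarith
    _ ≤ b / (b - 1) * B := by gcongr; exact h m (S.max'_mem hS)

section LacunaryBumpSum

variable {E : Type*} [NormedAddCommGroup E]

def lacunaryBumpSum (ρ c a : ℝ) (N : ℕ) (x : E) : ℝ :=
  ∑ i ∈ Finset.Icc 1 N, ρ ^ (c * i) * (Metric.ball (0 : E) (a * ρ ^ (-(i : ℝ)))).indicator 1 x

variable {ρ c a : ℝ} {N : ℕ}

theorem lacunaryBumpSum_eq_sum_filter (hρ : 0 ≤ ρ) (x : E) :
    lacunaryBumpSum ρ c a N x =
      ∑ i ∈ (Finset.Icc 1 N).filter (fun i : ℕ => ‖x‖ < a * ρ ^ (-(i : ℝ))), (ρ ^ c) ^ i := by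
  rw [Finset.sum_filter]
  refine Finset.sum_congr rfl fun i _ => ?_
  rw [← Real.rpow_mul_natCast hρ]
  by_cases hx : ‖x‖ < a * ρ ^ (-(i : ℝ))
  · rw [indicator_of_mem (mem_ball_zero_iff.mpr hx), if_pos hx, Pi.one_apply, mul_one]
  · rw [indicator_of_notMem (mt mem_ball_zero_iff.mp hx), if_neg hx, mul_zero]

theorem lacunaryBumpSum_zero : lacunaryBumpSum ρ c a 0 = (0 : E → ℝ) := by
  ext x
  simp [lacunaryBumpSum]

theorem lacunaryBumpSum_nonneg (hρ : 0 ≤ ρ) (x : E) : 0 ≤ lacunaryBumpSum ρ c a N x :=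
  Finset.sum_nonneg fun _ _ =>
    mul_nonneg (Real.rpow_nonneg hρ _) (indicator_nonneg (fun _ _ => zero_le_one) _)

theorem abs_lacunaryBumpSum (hρ : 0 ≤ ρ) (x : E) :
    |lacunaryBumpSum ρ c a N x| = lacunaryBumpSum ρ c a N x :=
  abs_of_nonneg (lacunaryBumpSum_nonneg hρ x)

theorem lacunaryBumpSum_le_of_forall_pow_le (hρ : 1 < ρ) (hc : 0 < c) {B : ℝ} (hB : 0 ≤ B)
    {x : E} (h : ∀ i : ℕ, ‖x‖ < a * ρ ^ (-(i : ℝ)) → i ≤ N → (ρ ^ c) ^ i ≤ B) :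
    lacunaryBumpSum ρ c a N x ≤ ρ ^ c / (ρ ^ c - 1) * B := by
  rw [lacunaryBumpSum_eq_sum_filter (by linarith)]
  refine sum_pow_le_of_forall_pow_le (Real.one_lt_rpow hρ hc) hB fun i hi => ?_
  simp only [Finset.mem_filter, Finset.mem_Icc] at hi
  exact h i hi.2 hi.1.2

theorem lacunaryBumpSum_le (hρ : 1 < ρ) (hc : 0 < c) (x : E) :
    lacunaryBumpSum ρ c a N x ≤ ρ ^ c / (ρ ^ c - 1) * (ρ ^ c) ^ N :=
  lacunaryBumpSum_le_of_forall_pow_le hρ hc (by positivity) fun _ _ hi =>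
    pow_le_pow_right₀ (Real.one_lt_rpow hρ hc).le hi

theorem abs_lacunaryBumpSum_le (hρ : 1 < ρ) (hc : 0 < c) (x : E) :
    |lacunaryBumpSum ρ c a N x| ≤ ρ ^ c / (ρ ^ c - 1) * (ρ ^ c) ^ N := by
  rw [abs_lacunaryBumpSum (by linarith) x]
  exact lacunaryBumpSum_le hρ hc x

theorem lacunaryBumpSum_le_div_norm_rpow (hρ : 1 < ρ) (hc : 0 < c) (ha : 0 ≤ a) {x : E}
    (hx : x ≠ 0) :
    lacunaryBumpSum ρ c a N x ≤ ρ ^ c / (ρ ^ c - 1) * (a / ‖x‖) ^ c := by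
  have hρ0 : 0 < ρ := by linarith
  refine lacunaryBumpSum_le_of_forall_pow_le hρ hc (by positivity) fun i hi _ => ?_
  rw [← Real.rpow_mul_natCast hρ0.le, mul_comm, Real.rpow_mul hρ0.le, Real.rpow_natCast]
  refine Real.rpow_le_rpow (by positivity) ?_ hc.le
  rw [Real.rpow_neg hρ0.le, Real.rpow_natCast, ← div_eq_mul_inv] at hi
  rw [le_div_iff₀ (norm_pos_iff.mpr hx)]
  exact ((lt_div_iff₀ (by positivity)).mp hi).le |>.trans_eq' (mul_comm _ _)

theorem norm_lt_of_lt_lacunaryBumpSum (hρ : 1 < ρ) (hc : 0 < c) (ha : 0 < a) {t : ℝ}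
    (ht : 0 < t) {x : E} (hx : t < lacunaryBumpSum ρ c a N x) :
    ‖x‖ < a * (ρ ^ c / (ρ ^ c - 1) / t) ^ c⁻¹ := by
  set C₀ := ρ ^ c / (ρ ^ c - 1)
  have hC₀ : 0 < C₀ := div_pos (by positivity) (by linarith [Real.one_lt_rpow hρ hc])
  rcases eq_or_ne x 0 with rfl | hx0
  · simpa using mul_pos ha (Real.rpow_pos_of_pos (div_pos hC₀ ht) _)
  have hxn := norm_pos_iff.mpr hx0
  have key : t / C₀ < (a / ‖x‖) ^ c := by
    rw [div_lt_iff₀' hC₀]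
    exact hx.trans_le (lacunaryBumpSum_le_div_norm_rpow hρ hc ha.le hx0)
  have key' : (‖x‖ / a) ^ c < C₀ / t := by
    rw [← inv_div, Real.inv_rpow (by positivity), ← inv_div t C₀]
    exact inv_strictAnti₀ (by positivity) key
  rw [← div_lt_iff₀' ha]
  exact (Real.lt_rpow_inv_iff_of_pos (by positivity) (by positivity) hc).mpr key'

theorem norm_lt_of_lacunaryBumpSum_pos (hρ : 1 < ρ) (ha : 0 ≤ a) {x : E}
    (hx : 0 < lacunaryBumpSum ρ c a N x) : ‖x‖ < a / ρ := by
  rw [lacunaryBumpSum_eq_sum_filter (by linarith)] at hx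
  obtain ⟨i, hi⟩ := Finset.nonempty_of_sum_ne_zero hx.ne'
  simp only [Finset.mem_filter, Finset.mem_Icc] at hi
  refine hi.2.trans_le ?_
  rw [div_eq_mul_inv, ← Real.rpow_neg_one]
  gcongr
  · exact hρ.le
  · exact_mod_cast hi.1.1

theorem measure_lt_abs_lacunaryBumpSum_le [MeasurableSpace E] (μ : Measure E) (hρ : 1 < ρ)
    (ha : 0 ≤ a) {t : ℝ} (ht : 0 ≤ t) :
    μ {x | t < |lacunaryBumpSum ρ c a N x|} ≤ μ (Metric.ball 0 (a / ρ)) :=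
  measure_mono fun x hx => mem_ball_zero_iff.mpr <| norm_lt_of_lacunaryBumpSum_pos hρ ha <|
    ht.trans_lt (hx.trans_eq (abs_lacunaryBumpSum (by linarith) x))

end LacunaryBumpSum

theorem lintegral_Ioc_ofReal_one_div {a b : ℝ} (ha : 0 < a) (hab : a ≤ b) :
    ∫⁻ t in Ioc a b, ENNReal.ofReal (1 / t) = ENNReal.ofReal (Real.log (b / a)) := by
  have h0 : (0 : ℝ) ∉ uIcc a b := by
    rw [uIcc_of_le hab]
    exact fun h => ha.not_ge h.1
  have hint : IntegrableOn (fun t : ℝ => 1 / t) (Ioc a b) :=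
    ((continuousOn_const.div continuousOn_id fun t ht => (ha.trans_le ht.1).ne').integrableOn_Icc
      ).mono_set Ioc_subset_Icc_self
  rw [← ofReal_integral_eq_lintegral_ofReal hint, ← intervalIntegral.integral_of_le hab,
    integral_one_div h0]
  exact (ae_restrict_iff' measurableSet_Ioc).mpr
    (ae_of_all _ fun t ht => (one_div_pos.mpr (ha.trans ht.1)).le)

theorem setLIntegral_Ioi_zero_le {g : ℝ → ℝ≥0∞} {m k : ℝ≥0∞} {T : ℝ} (hT : 1 ≤ T)
    (h_small : ∀ t ∈ Ioc (0 : ℝ) 1, g t ≤ m)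
    (h_mid : ∀ t ∈ Ioc 1 T, g t ≤ k * ENNReal.ofReal (1 / t))
    (h_large : ∀ t ∈ Ioi T, g t = 0) :
    ∫⁻ t in Ioi 0, g t ≤ m + k * ENNReal.ofReal (Real.log T) := by
  rw [← Ioc_union_Ioi_eq_Ioi zero_le_one, ← Ioc_union_Ioi_eq_Ioi hT]
  calc ∫⁻ t in Ioc 0 1 ∪ (Ioc 1 T ∪ Ioi T), g t
      ≤ (∫⁻ t in Ioc 0 1, g t) + ((∫⁻ t in Ioc 1 T, g t) + ∫⁻ t in Ioi T, g t) :=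
        (lintegral_union_le _ _ _).trans (by gcongr; exact lintegral_union_le _ _ _)
    _ ≤ (∫⁻ _ in Ioc (0 : ℝ) 1, m) +
          ((∫⁻ t in Ioc 1 T, k * ENNReal.ofReal (1 / t)) + ∫⁻ _ in Ioi T, 0) := by
        gcongr ?_ + (?_ + ?_)
        · exact setLIntegral_mono' measurableSet_Ioc h_small
        · exact setLIntegral_mono' measurableSet_Ioc h_mid
        · exact (setLIntegral_congr_fun measurableSet_Ioi h_large).le
    _ = m + k * ENNReal.ofReal (Real.log T) := by
        rw [setLIntegral_const, Real.volume_Ioc, lintegral_const_mul k (by fun_prop),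
          lintegral_Ioc_ofReal_one_div zero_lt_one hT]
        simp

theorem lorentzNorm_le_of_bounds {d : ℕ} {p s : ℝ} {f : EuclideanSpace ℝ (Fin d) → ℝ}
    (hp : 0 < p) (hs : 1 ≤ s) {M K T : ℝ} (hM : 0 ≤ M) (hK : 0 ≤ K) (hT : 1 ≤ T)
    (h_supp : ∀ t, 0 < t → volume {x | t < |f x|} ≤ ENNReal.ofReal M)
    (h_weak : ∀ t, 0 < t →
      ENNReal.ofReal t * volume {x | t < |f x|} ^ (1 / p) ≤ ENNReal.ofReal K)
    (h_bdd : ∀ x, |f x| ≤ T) :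
    lorentzNorm d p s f ≤
      ENNReal.ofReal (p ^ (1 / s) * (M ^ (s / p) + K ^ s * Real.log T) ^ (1 / s)) := by
  set g : ℝ → ℝ≥0∞ := fun t =>
    (ENNReal.ofReal t * volume {x | t < |f x|} ^ (1 / p)) ^ s * ENNReal.ofReal (1 / t)
  have hs0 : 0 < s := zero_lt_one.trans_le hs
  have h_small : ∀ t ∈ Ioc (0 : ℝ) 1, g t ≤ ENNReal.ofReal (M ^ (s / p)) := by
    rintro t ⟨ht, ht1⟩
    calc g t ≤ (ENNReal.ofReal t * ENNReal.ofReal M ^ (1 / p)) ^ s * ENNReal.ofReal (1 / t) := by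
          dsimp only [g]; gcongr; exact h_supp t ht
      _ = ENNReal.ofReal (t ^ (s - 1) * M ^ (s / p)) := by
          rw [ENNReal.ofReal_rpow_of_nonneg hM (by positivity), ← ENNReal.ofReal_mul ht.le,
            ENNReal.ofReal_rpow_of_nonneg (by positivity) hs0.le,
            ← ENNReal.ofReal_mul (by positivity),
            Real.mul_rpow ht.le (by positivity), ← Real.rpow_mul hM, Real.rpow_sub_one ht.ne']
          congr 1; field_simp
      _ ≤ ENNReal.ofReal (M ^ (s / p)) := by
          gcongr
          exact mul_le_of_le_one_left (by positivity) (Real.rpow_le_one ht.le ht1 (by linarith))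
  have h_mid : ∀ t ∈ Ioc (1 : ℝ) T, g t ≤ ENNReal.ofReal (K ^ s) * ENNReal.ofReal (1 / t) := by
    rintro t ⟨ht, -⟩
    calc g t ≤ ENNReal.ofReal K ^ s * ENNReal.ofReal (1 / t) := by
          dsimp only [g]; gcongr; exact h_weak t (zero_lt_one.trans ht)
      _ = _ := by rw [ENNReal.ofReal_rpow_of_nonneg hK hs0.le]
  have h_large : ∀ t ∈ Ioi T, g t = 0 := by
    intro t ht
    have : {x | t < |f x|} = ∅ :=
      eq_empty_of_forall_notMem fun x hx => (h_bdd x).not_gt (ht.trans hx)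
    simp [g, this, ENNReal.zero_rpow_of_pos, hp, hs0]
  have h_int := setLIntegral_Ioi_zero_le hT h_small h_mid h_large
  have hlog := mul_nonneg (Real.rpow_nonneg hK s) (Real.log_nonneg hT)
  rw [lorentzNorm, ENNReal.ofReal_mul (by positivity),
    ← ENNReal.ofReal_rpow_of_nonneg (add_nonneg (by positivity) hlog) (by positivity),
    ENNReal.ofReal_add (by positivity) hlog, ENNReal.ofReal_mul (by positivity)]
  gcongr

theorem lorentzNorm_zero {d : ℕ} {p s : ℝ} (hp : 0 < p) (hs : 1 ≤ s) : lorentzNorm d p s 0 = 0 := by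
  have hs0 : s ≠ 0 := (zero_lt_one.trans_le hs).ne'
  refine le_antisymm ((lorentzNorm_le_of_bounds hp hs le_rfl le_rfl le_rfl
    (fun t ht => ?_) (fun t ht => ?_) (fun x => by simp)).trans_eq ?_) zero_le
  · simp [not_lt.mpr ht.le]
  · simp [not_lt.mpr ht.le, hp]
  · simp [Real.zero_rpow (inv_ne_zero hs0), (by positivity : s / p ≠ 0)]

section Measure

variable {E : Type*} [NormedAddCommGroup E] [NormedSpace ℝ E] [MeasurableSpace E] [BorelSpace E]
  [FiniteDimensional ℝ E] (μ : Measure E) [μ.IsAddHaarMeasure]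

theorem ofReal_mul_measure_ball_rpow_eq {p c r t : ℝ} (hp : 0 < p)
    (hdim : (Module.finrank ℝ E : ℝ) = c * p) (hr : 0 < r) (ht : 0 < t) :
    ENNReal.ofReal t * μ (Metric.ball 0 r) ^ (1 / p) =
      ENNReal.ofReal (t * r ^ c * (μ (Metric.ball 0 1)).toReal ^ (1 / p)) := by
  rw [Measure.addHaar_ball_of_pos μ 0 hr, ← ENNReal.ofReal_toReal measure_ball_lt_top.ne,
    ← ENNReal.ofReal_mul (by positivity),
    ENNReal.ofReal_rpow_of_nonneg (by positivity) (by positivity),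
    ← ENNReal.ofReal_mul ht.le, Real.mul_rpow (by positivity) ENNReal.toReal_nonneg,
    ← Real.rpow_natCast, ← Real.rpow_mul hr.le, hdim, mul_one_div, mul_div_cancel_right₀ _ hp.ne',
    ENNReal.toReal_ofReal ENNReal.toReal_nonneg, mul_assoc]

variable {ρ c a p : ℝ} {N : ℕ}

theorem ofReal_mul_measure_lt_lacunaryBumpSum_rpow_le (hρ : 1 < ρ) (hc : 0 < c) (ha : 0 < a)
    (hp : 0 < p) (hdim : (Module.finrank ℝ E : ℝ) = c * p) {t : ℝ} (ht : 0 < t) :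
    ENNReal.ofReal t * μ {x | t < |lacunaryBumpSum ρ c a N x|} ^ (1 / p) ≤
      ENNReal.ofReal (a ^ c * (ρ ^ c / (ρ ^ c - 1)) * (μ (Metric.ball 0 1)).toReal ^ (1 / p)) := by
  set C₀ := ρ ^ c / (ρ ^ c - 1)
  have hC₀ : 0 < C₀ := div_pos (by positivity) (by linarith [Real.one_lt_rpow hρ hc])
  have hsub : {x | t < |lacunaryBumpSum ρ c a N x|} ⊆ Metric.ball (0 : E) (a * (C₀ / t) ^ c⁻¹) :=
    fun x hx => mem_ball_zero_iff.mpr <| norm_lt_of_lt_lacunaryBumpSum hρ hc ha ht <|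
      hx.trans_eq (abs_lacunaryBumpSum (by linarith) x)
  calc _ ≤ ENNReal.ofReal t * μ (Metric.ball (0 : E) (a * (C₀ / t) ^ c⁻¹)) ^ (1 / p) := by
        gcongr
    _ = _ := by
        rw [ofReal_mul_measure_ball_rpow_eq μ hp hdim (by positivity) ht,
          Real.mul_rpow ha.le (by positivity), ← Real.rpow_mul (by positivity),
          inv_mul_cancel₀ hc.ne', Real.rpow_one]
        congr 2
        field_simp

end Measure

theorem add_mul_log_mul_pow_le {m k C b : ℝ} (hm : 0 ≤ m) (hk : 0 ≤ k) (hC : 1 ≤ C) (hb : 0 < b)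
    {N : ℕ} (hN : 1 ≤ N) :
    m + k * Real.log (C * b ^ N) ≤ (m + k * (Real.log C + Real.log b)) * N := by
  have hN1 : (1 : ℝ) ≤ N := Nat.one_le_cast.mpr hN
  have hlog : Real.log (C * b ^ N) ≤ (Real.log C + Real.log b) * N := by
    rw [Real.log_mul (by positivity) (by positivity), Real.log_pow]
    nlinarith [Real.log_nonneg hC]
  calc m + k * Real.log (C * b ^ N) ≤ m * N + k * ((Real.log C + Real.log b) * N) := by
        gcongr
        exact le_mul_of_one_le_right hm hN1
    _ = (m + k * (Real.log C + Real.log b)) * N := by ring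

theorem lorentzNorm_lacunaryBumpSum_le {d : ℕ} (hd : 0 < d) {ρ p s a : ℝ} (hρ : 1 < ρ)
    (hp : 0 < p) (hs : 1 ≤ s) (ha : 0 < a) :
    ∃ C : ℝ, 0 < C ∧ ∀ N : ℕ,
      lorentzNorm d p s (lacunaryBumpSum ρ (d / p) a N) ≤
        ENNReal.ofReal (C * (N : ℝ) ^ (1 / s)) := by
  set c : ℝ := d / p
  have hc : 0 < c := div_pos (Nat.cast_pos.mpr hd) hp
  have hdim : (Module.finrank ℝ (EuclideanSpace ℝ (Fin d)) : ℝ) = c * p := by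
    simp [c, hp.ne']
  set b := ρ ^ c
  have hb : 1 < b := Real.one_lt_rpow hρ hc
  set C₀ := b / (b - 1)
  have hC₀ : 1 ≤ C₀ := by rw [le_div_iff₀ (by linarith)]; linarith
  set M := (volume (Metric.ball (0 : EuclideanSpace ℝ (Fin d)) (a / ρ))).toReal
  have hM : 0 < M := ENNReal.toReal_pos (Metric.measure_ball_pos _ _ (by positivity)).ne'
    measure_ball_lt_top.ne
  set K := a ^ c * C₀ * (volume (Metric.ball (0 : EuclideanSpace ℝ (Fin d)) 1)).toReal ^ (1 / p)
  set A := M ^ (s / p) + K ^ s * (Real.log C₀ + Real.log b)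
  have hA : 0 < A := by
    have := Real.log_nonneg hC₀
    have := Real.log_nonneg hb.le
    positivity
  refine ⟨p ^ (1 / s) * A ^ (1 / s), by positivity, fun N => ?_⟩
  rcases Nat.eq_zero_or_pos N with rfl | hN
  · rw [lacunaryBumpSum_zero, lorentzNorm_zero hp hs]
    exact zero_le
  have hT : 1 ≤ C₀ * b ^ N := one_le_mul_of_one_le_of_one_le hC₀ (one_le_pow₀ hb.le)
  have h_supp (t : ℝ) (ht : 0 < t) :
      volume {x : EuclideanSpace ℝ (Fin d) | t < |lacunaryBumpSum ρ c a N x|} ≤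
        ENNReal.ofReal M := by
    rw [ENNReal.ofReal_toReal measure_ball_lt_top.ne]
    exact measure_lt_abs_lacunaryBumpSum_le volume hρ ha.le ht.le
  calc lorentzNorm d p s (lacunaryBumpSum ρ c a N)
      ≤ ENNReal.ofReal (p ^ (1 / s) * (M ^ (s / p) + K ^ s * Real.log (C₀ * b ^ N)) ^ (1 / s)) :=
        lorentzNorm_le_of_bounds hp hs hM.le (by positivity) hT h_supp
          (fun t ht => ofReal_mul_measure_lt_lacunaryBumpSum_rpow_le volume hρ hc ha hp hdim ht)
          (abs_lacunaryBumpSum_le hρ hc)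
    _ ≤ ENNReal.ofReal (p ^ (1 / s) * (A * N) ^ (1 / s)) := by
        gcongr
        · exact add_nonneg (by positivity) (mul_nonneg (by positivity) (Real.log_nonneg hT))
        · exact add_mul_log_mul_pow_le (by positivity) (by positivity) hC₀ (by positivity) hN
    _ = ENNReal.ofReal (p ^ (1 / s) * A ^ (1 / s) * (N : ℝ) ^ (1 / s)) := by
        rw [Real.mul_rpow hA.le (Nat.cast_nonneg N), mul_assoc]

theorem stmt10_general (d : ℕ) (hd : 1 ≤ d) (p₀ : ℝ) (hp : 1 ≤ p₀) (s : ℝ) (hs : 1 < s)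
    (a : ℝ) (ha : 0 < a) :
    ∃ C : ℝ, 0 < C ∧ ∀ N : ℕ,
      lorentzNorm d p₀ s (fun x => ∑ i ∈ Finset.Icc 1 N,
          (4 : ℝ) ^ (((d : ℝ) / p₀) * i) *
            (Metric.ball (0 : EuclideanSpace ℝ (Fin d)) (a * 4 ^ (-(i : ℝ)))).indicator 1 x) ≤
        ENNReal.ofReal (C * (N : ℝ) ^ (1 / s)) :=
  lorentzNorm_lacunaryBumpSum_le hd (by norm_num) (zero_lt_one.trans_le hp) hs.le ha

/-- the lacunary sum of indicator bumps
`f = ∑_{i=1}^N 4^{(d/p₀)i} χ_{B(0, a4^{-i})}` has Lorentz norm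
`‖f‖_{L^{p₀,s}} ≲ N^{1/s}`, uniformly in `N`. -/
theorem stmt10 (d : ℕ) (hd : 1 ≤ d) (p₀ : ℝ) (hp : 1 ≤ p₀) (s : ℝ) (hs : 1 < s)
    (a : ℝ) (ha : 0 < a) (ha1 : a < 1) :
    ∃ C : ℝ, 0 < C ∧ ∀ N : ℕ,
      lorentzNorm d p₀ s (fun x => ∑ i ∈ Finset.Icc 1 N,
          (4 : ℝ) ^ (((d : ℝ) / p₀) * i) *
            (Metric.ball (0 : EuclideanSpace ℝ (Fin d)) (a * 4 ^ (-(i : ℝ)))).indicator 1 x) ≤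
        ENNReal.ofReal (C * (N : ℝ) ^ (1 / s)) :=
  stmt10_general d hd p₀ hp s hs a ha
end
end
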